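/- As δ → 0, the functional q ↦ ∫_Ω 𝓖*_{ε,δ}(x, q(x)) dx converges locally uniformly on bounded subsets of L^α(Ω;ℝ^d) to the functional q ↦ ∫_Ω (w(x)|q(x)| + (ε/α)|q(x)|^α) dx. -/

import Mathlib

/- The pointwise error `|𝓖*_{ε,δ}(c, r) - (c r + (ε/α) r^α)|` is `O(δ + δ^α) (1 + r^α)` uniformly
in `c ∈ [0, M]`: below the threshold `r ≤ δ` every term is `O(δ + δ^α)`, and above it the only
non-trivial term is `r^α - (r - δ)^α ≤ α δ r^(α-1)`, by convexity of `t ↦ t^α`. Integrating over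
`Ω` bounds the error by `O(δ + δ^α) (|Ω| + ‖q‖^α)`, which is uniform on bounded subsets of `L^α`. -/

open MeasureTheory Filter
open scoped ENNReal

/-- The Fenchel conjugate `𝓖*_{ε,δ}` of the doubly regularized integrand. -/
noncomputable def calGstar {F : Type*} [NormedAddCommGroup F] (ε α δ w : ℝ) (q : F) : ℝ :=
  if ‖q‖ ≤ δ then ‖q‖ ^ 2 * w / (2 * δ) - δ * w
  else (ε / α) * (‖q‖ - δ) ^ α - (3 / 2) * (δ * w) + ‖q‖ * w

lemma calGstar_norm {F : Type*} [NormedAddCommGroup F] (ε α δ c : ℝ) (v : F) :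
    calGstar ε α δ c v = calGstar ε α δ c ‖v‖ := by
  simp [calGstar]

lemma measurable_calGstar_uncurry (ε α δ : ℝ) :
    Measurable fun z : ℝ × ℝ => calGstar ε α δ z.1 z.2 := by
  unfold calGstar
  exact Measurable.ite (measurableSet_le (by fun_prop) measurable_const) (by fun_prop)
    (by fun_prop)

lemma Real.rpow_sub_rpow_le_mul {a b p : ℝ} (ha : 0 ≤ a) (hab : a ≤ b) (hp : 1 ≤ p) :
    b ^ p - a ^ p ≤ p * b ^ (p - 1) * (b - a) := by
  rcases hab.eq_or_lt with rfl | hab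
  · simp
  have hslope := (convexOn_rpow hp).slope_le_of_hasDerivAt ha (ha.trans hab.le) hab
    (Real.hasDerivAt_rpow_const (Or.inr hp))
  rwa [slope_def_field, div_le_iff₀ (sub_pos.mpr hab)] at hslope

lemma Real.rpow_le_one_add_rpow {r s t : ℝ} (hr : 0 ≤ r) (hs : 0 ≤ s) (hst : s ≤ t) :
    r ^ s ≤ 1 + r ^ t := by
  rcases le_total r 1 with hr1 | hr1
  · linarith [Real.rpow_le_one hr hr1 hs, Real.rpow_nonneg hr t]
  · linarith [Real.rpow_le_rpow_of_exponent_le hr1 hst]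

section Pointwise

variable {ε α δ c r : ℝ}

lemma abs_calGstar_sub_le_of_le (hε : 0 ≤ ε) (hα : 0 < α) (hc : 0 ≤ c) (hr : 0 ≤ r)
    (hrδ : r ≤ δ) :
    |calGstar ε α δ c r - (c * r + ε / α * r ^ α)| ≤ 5 / 2 * δ * c + ε / α * δ ^ α := by
  have hδ : 0 ≤ δ := hr.trans hrδ
  have hεα : 0 ≤ ε / α := div_nonneg hε hα.le
  have hquad_nonneg : 0 ≤ r ^ 2 * c / (2 * δ) := by positivity
  have hquad_le : r ^ 2 * c / (2 * δ) ≤ δ * c / 2 :=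
    div_le_of_le_mul₀ (by positivity) (by positivity) (by nlinarith [mul_le_mul hrδ hrδ hr hδ])
  have hlin : c * r ≤ c * δ := mul_le_mul_of_nonneg_left hrδ hc
  have hpow_nonneg : 0 ≤ ε / α * r ^ α := mul_nonneg hεα (Real.rpow_nonneg hr α)
  have hpow_le : ε / α * r ^ α ≤ ε / α * δ ^ α :=
    mul_le_mul_of_nonneg_left (Real.rpow_le_rpow hr hrδ hα.le) hεα
  rw [calGstar, Real.norm_of_nonneg hr, if_pos hrδ, abs_le]
  constructor <;> linarith [mul_nonneg hδ hc, mul_nonneg hc hr]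

lemma abs_calGstar_sub_le_of_lt (hε : 0 ≤ ε) (hα : 1 ≤ α) (hc : 0 ≤ c) (hδ : 0 ≤ δ)
    (hδr : δ < r) :
    |calGstar ε α δ c r - (c * r + ε / α * r ^ α)| ≤ δ * (3 / 2 * c + ε * r ^ (α - 1)) := by
  have hr : 0 ≤ r := hδ.trans hδr.le
  have hεα : 0 ≤ ε / α := div_nonneg hε (zero_le_one.trans hα)
  have hgap_nonneg : 0 ≤ ε / α * (r ^ α - (r - δ) ^ α) :=
    mul_nonneg hεα (sub_nonneg.mpr (Real.rpow_le_rpow (by linarith) (by linarith) (by linarith)))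
  have hgap_le : ε / α * (r ^ α - (r - δ) ^ α) ≤ ε * δ * r ^ (α - 1) := by
    calc ε / α * (r ^ α - (r - δ) ^ α)
        ≤ ε / α * (α * r ^ (α - 1) * (r - (r - δ))) :=
          mul_le_mul_of_nonneg_left
            (Real.rpow_sub_rpow_le_mul (by linarith) (by linarith) hα) hεα
      _ = ε * δ * r ^ (α - 1) := by
          field_simp [(zero_lt_one.trans_le hα).ne']
          ring
  rw [calGstar, Real.norm_of_nonneg hr, if_neg (not_le.mpr hδr), abs_le]
  constructor <;> linarith [mul_nonneg hδ hc]

lemma abs_calGstar_sub_le {M : ℝ} (hε : 0 ≤ ε) (hα : 1 < α) (hδ : 0 < δ) (hc : 0 ≤ c)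
    (hcM : c ≤ M) (hr : 0 ≤ r) :
    |calGstar ε α δ c r - (c * r + ε / α * r ^ α)| ≤
      (δ * (5 / 2 * M + ε) + ε / α * δ ^ α) * (1 + r ^ α) := by
  have hM : 0 ≤ M := hc.trans hcM
  have hδα : 0 ≤ ε / α * δ ^ α := mul_nonneg (by positivity) (Real.rpow_nonneg hδ.le α)
  have hrα : 0 ≤ r ^ α := Real.rpow_nonneg hr α
  rcases le_or_gt r δ with hrδ | hδr
  · calc _ ≤ 5 / 2 * δ * c + ε / α * δ ^ α :=
          abs_calGstar_sub_le_of_le hε (by linarith) hc hr hrδ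
      _ ≤ δ * (5 / 2 * M + ε) + ε / α * δ ^ α := by nlinarith
      _ ≤ _ := le_mul_of_one_le_right (by positivity) (by linarith)
  · have hr' : r ^ (α - 1) ≤ 1 + r ^ α := Real.rpow_le_one_add_rpow hr (by linarith) (by linarith)
    calc _ ≤ δ * (3 / 2 * c + ε * r ^ (α - 1)) :=
          abs_calGstar_sub_le_of_lt hε hα.le hc hδ.le hδr
      _ ≤ δ * ((5 / 2 * M + ε) * (1 + r ^ α)) := by
          gcongr
          nlinarith [mul_le_mul_of_nonneg_left hr' hε]
      _ ≤ _ := by nlinarith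

end Pointwise

section Integral

variable {X E : Type*} [MeasurableSpace X] {μ : Measure X} [NormedAddCommGroup E]

lemma integral_norm_rpow_eq_lpNorm_rpow {p : ℝ} (hp : 0 < p) {f : X → E}
    (hf : AEStronglyMeasurable f μ) :
    ∫ x, ‖f x‖ ^ p ∂μ = lpNorm f (ENNReal.ofReal p) μ ^ p := by
  rw [lpNorm_eq_integral_norm_rpow_toReal (by simpa using hp) ENNReal.ofReal_ne_top hf,
    ENNReal.toReal_ofReal hp.le,
    Real.rpow_inv_rpow (integral_nonneg fun _ => by positivity) hp.ne']

lemma abs_integral_calGstar_sub_le [IsFiniteMeasure μ] {ε α δ M : ℝ} (hε : 0 ≤ ε) (hα : 1 < α)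
    (hδ : 0 < δ) {c : X → ℝ} (hc : AEStronglyMeasurable c μ)
    (hcM : ∀ᵐ x ∂μ, 0 ≤ c x ∧ c x ≤ M) {f : X → E} (hf : MemLp f (ENNReal.ofReal α) μ) :
    |∫ x, calGstar ε α δ (c x) (f x) ∂μ - ∫ x, (c x * ‖f x‖ + ε / α * ‖f x‖ ^ α) ∂μ| ≤
      (δ * (5 / 2 * M + ε) + ε / α * δ ^ α) *
        (μ.real Set.univ + lpNorm f (ENNReal.ofReal α) μ ^ α) := by
  set η := δ * (5 / 2 * M + ε) + ε / α * δ ^ α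
  have hα0 : 0 < α := zero_lt_one.trans hα
  have hpow : Integrable (fun x => ‖f x‖ ^ α) μ := by
    simpa [ENNReal.toReal_ofReal hα0.le] using
      hf.integrable_norm_rpow (by simpa using hα0) ENNReal.ofReal_ne_top
  have hnorm : Integrable (fun x => ‖f x‖) μ :=
    (hf.integrable (by simpa using hα.le)).norm
  have hlim : Integrable (fun x => c x * ‖f x‖ + ε / α * ‖f x‖ ^ α) μ := by
    refine (hnorm.bdd_mul (c := M) hc ?_).add (hpow.const_mul _)
    filter_upwards [hcM] with x hx
    rw [Real.norm_of_nonneg hx.1]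
    exact hx.2
  have hbound : Integrable (fun x => η * (1 + ‖f x‖ ^ α)) μ :=
    ((integrable_const 1).add hpow).const_mul η
  have herr : ∀ᵐ x ∂μ, |calGstar ε α δ (c x) (f x) - (c x * ‖f x‖ + ε / α * ‖f x‖ ^ α)| ≤
      η * (1 + ‖f x‖ ^ α) := by
    filter_upwards [hcM] with x hx
    rw [calGstar_norm]
    exact abs_calGstar_sub_le hε hα hδ hx.1 hx.2 (norm_nonneg _)
  have herr_int : Integrable
      (fun x => calGstar ε α δ (c x) (f x) - (c x * ‖f x‖ + ε / α * ‖f x‖ ^ α)) μ := by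
    refine hbound.mono' ?_ herr
    simp_rw [calGstar_norm (F := E)]
    exact ((measurable_calGstar_uncurry ε α δ).comp_aemeasurable
      (hc.aemeasurable.prodMk hf.1.norm.aemeasurable)).aestronglyMeasurable.sub
      hlim.aestronglyMeasurable
  have hcalG : Integrable (fun x => calGstar ε α δ (c x) (f x)) μ := by
    refine (herr_int.add hlim).congr (.of_forall fun x => ?_)
    simp
  calc _ = |∫ x, (calGstar ε α δ (c x) (f x) - (c x * ‖f x‖ + ε / α * ‖f x‖ ^ α)) ∂μ| := by
        rw [integral_sub hcalG hlim]
    _ ≤ ∫ x, |calGstar ε α δ (c x) (f x) - (c x * ‖f x‖ + ε / α * ‖f x‖ ^ α)| ∂μ :=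
        abs_integral_le_integral_abs
    _ ≤ ∫ x, η * (1 + ‖f x‖ ^ α) ∂μ := integral_mono_ae herr_int.abs hbound herr
    _ = η * (μ.real Set.univ + lpNorm f (ENNReal.ofReal α) μ ^ α) := by
        rw [integral_const_mul, integral_add (integrable_const 1) hpow, integral_const,
          integral_norm_rpow_eq_lpNorm_rpow hα0 hf.1, smul_eq_mul, mul_one]

lemma Lp.norm_eq_lpNorm {p : ℝ≥0∞} (f : Lp E p μ) : ‖f‖ = lpNorm f p μ := by
  rw [Lp.norm_def, toReal_eLpNorm (Lp.aestronglyMeasurable f)]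

lemma Lp.abs_integral_calGstar_sub_le_of_norm_le [IsFiniteMeasure μ] {ε α δ M C : ℝ}
    (hε : 0 ≤ ε) (hα : 1 < α) (hδ : 0 < δ) (hM : 0 ≤ M) {c : X → ℝ}
    (hc : AEStronglyMeasurable c μ) (hcM : ∀ᵐ x ∂μ, 0 ≤ c x ∧ c x ≤ M)
    {q : Lp E (ENNReal.ofReal α) μ} (hq : ‖q‖ ≤ C) :
    |∫ x, calGstar ε α δ (c x) (q x) ∂μ - ∫ x, (c x * ‖q x‖ + ε / α * ‖q x‖ ^ α) ∂μ| ≤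
      (δ * (5 / 2 * M + ε) + ε / α * δ ^ α) * (μ.real Set.univ + C ^ α) := by
  refine (abs_integral_calGstar_sub_le hε hα hδ hc hcM (Lp.memLp q)).trans ?_
  gcongr
  · exact lpNorm_nonneg
  · rwa [← Lp.norm_eq_lpNorm]

end Integral

lemma tendsto_mul_add_mul_rpow_mul_nhds_zero {α : ℝ} (hα : 0 < α) (A B K : ℝ) :
    Tendsto (fun δ : ℝ => (δ * A + B * δ ^ α) * K) (nhds 0) (nhds 0) := by
  have hcont : Continuous fun δ : ℝ => (δ * A + B * δ ^ α) * K := by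
    fun_prop (disch := exact hα.le)
  simpa [Real.zero_rpow hα.ne'] using hcont.tendsto 0

theorem stmt11_general (d : ℕ) (Ω : Set (EuclideanSpace ℝ (Fin d)))
    (hΩ : IsCompact Ω) (hΩ' : MeasurableSet Ω)
    (w : EuclideanSpace ℝ (Fin d) → ℝ) (hw : ContinuousOn w Ω) (hw0 : ∀ x ∈ Ω, 0 ≤ w x)
    (ε α : ℝ) (hε : 0 < ε) (hα : 1 < α) (C : ℝ) :
    Tendsto (fun δ : ℝ =>
        ⨆ q : {q : Lp (EuclideanSpace ℝ (Fin d)) (ENNReal.ofReal α) (volume.restrict Ω) //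
            ‖q‖ ≤ C},
          |(∫ x in Ω, calGstar ε α δ (w x) (q.1 x)) -
            ∫ x in Ω, (w x * ‖q.1 x‖ + (ε / α) * ‖q.1 x‖ ^ α)|)
      (nhdsWithin 0 (Set.Ioi 0)) (nhds 0) := by
  have hα0 : 0 < α := zero_lt_one.trans hα
  obtain ⟨M, hM0, hM⟩ : ∃ M, 0 ≤ M ∧ ∀ x ∈ Ω, w x ≤ M := by
    obtain ⟨M, hM⟩ := hΩ.exists_bound_of_continuousOn hw
    exact ⟨max M 0, le_max_right _ _, fun x hx =>
      (le_abs_self _).trans ((hM x hx).trans (le_max_left _ _))⟩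
  have : IsFiniteMeasure (volume.restrict Ω) :=
    isFiniteMeasure_restrict.mpr hΩ.measure_lt_top.ne
  have hwM : ∀ᵐ x ∂(volume.restrict Ω), 0 ≤ w x ∧ w x ≤ M := by
    filter_upwards [ae_restrict_mem hΩ'] with x hx
    exact ⟨hw0 x hx, hM x hx⟩
  -- `max C 0`, not `C`: for `C < 0` the family is empty and its supremum is the junk value `0`.
  refine squeeze_zero' (.of_forall fun δ => Real.iSup_nonneg fun q => abs_nonneg _) ?_
    ((tendsto_mul_add_mul_rpow_mul_nhds_zero hα0 (5 / 2 * M + ε) (ε / α)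
      ((volume.restrict Ω).real Set.univ + max C 0 ^ α)).mono_left nhdsWithin_le_nhds)
  filter_upwards [self_mem_nhdsWithin] with δ (hδ : 0 < δ)
  exact Real.iSup_le (fun q => Lp.abs_integral_calGstar_sub_le_of_norm_le hε.le hα hδ hM0
    (hw.aestronglyMeasurable hΩ') hwM (q.2.trans (le_max_left _ _))) (by positivity)

/-- As `δ → 0⁺`, the functional `q ↦ ∫_Ω 𝓖*_{ε,δ}(x, q(x)) dx`
converges, uniformly on bounded subsets of `L^α(Ω;ℝ^d)`, to
`q ↦ ∫_Ω (w(x)|q(x)| + (ε/α)|q(x)|^α) dx`. -/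
theorem stmt11 (d : ℕ) (Ω : Set (EuclideanSpace ℝ (Fin d)))
    (hΩ : IsCompact Ω) (hΩ' : MeasurableSet Ω)
    (w : EuclideanSpace ℝ (Fin d) → ℝ) (hw : ContinuousOn w Ω) (hw0 : ∀ x ∈ Ω, 0 ≤ w x)
    (ε α : ℝ) (hε : 0 < ε) (hα : 1 < α) [Fact (1 ≤ ENNReal.ofReal α)] (C : ℝ) :
    Tendsto (fun δ : ℝ =>
        ⨆ q : {q : Lp (EuclideanSpace ℝ (Fin d)) (ENNReal.ofReal α) (volume.restrict Ω) //
            ‖q‖ ≤ C},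
          |(∫ x in Ω, calGstar ε α δ (w x) (q.1 x)) -
            ∫ x in Ω, (w x * ‖q.1 x‖ + (ε / α) * ‖q.1 x‖ ^ α)|)
      (nhdsWithin 0 (Set.Ioi 0)) (nhds 0) :=
  stmt11_general d Ω hΩ hΩ' w hw hw0 ε α hε hα C
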